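/- Let α ∈ (1,2) and p(x) = (1/π) ∫_0^∞ e^{−λ^α} cos(λx) dλ. Then ∫_ℝ |p''(u)| du ≤ (8/π)·√((α+3)/α). -/

import Mathlib

set_option maxHeartbeats 1000000

open MeasureTheory Real Set Filter Topology

lemma Gamma_three : Real.Gamma 3 = 2 := by
  have h2 : Real.Gamma 2 = 1 := by
    have := Real.Gamma_add_one (s := 1) one_ne_zero
    simpa [Real.Gamma_one] using this
  have := Real.Gamma_add_one (s := 2) two_ne_zero
  rw [show (3:ℝ) = 2 + 1 by norm_num, this, h2]; ring

lemma Gamma_le_of_convex {s a b : ℝ} (ha : 0 < a) (hb : 0 < b)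
    (hab : a ≤ b) (hs : s ∈ Icc a b) :
    Real.Gamma s ≤ max (Real.Gamma a) (Real.Gamma b) := by
  rcases eq_or_lt_of_le hab with rfl | hlt
  · obtain rfl : s = a := le_antisymm hs.2 hs.1
    simp
  · set t : ℝ := (s - a) / (b - a) with ht
    have h0t : 0 ≤ t := div_nonneg (by linarith [hs.1]) (by linarith)
    have ht1 : t ≤ 1 := by
      rw [div_le_one (by linarith)]; linarith [hs.2]
    have hcomb : (1 - t) * a + t * b = s := by
      have hba : b - a ≠ 0 := by linarith
      have h' : t * (b - a) = s - a := by rw [ht]; exact div_mul_cancel₀ _ hba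
      linear_combination h'
    have := Real.convexOn_Gamma.2 (mem_Ioi.2 ha) (mem_Ioi.2 hb)
      (by linarith : (0:ℝ) ≤ 1 - t) h0t (by ring)
    rw [smul_eq_mul, smul_eq_mul, smul_eq_mul, smul_eq_mul, hcomb] at this
    calc Real.Gamma s ≤ (1 - t) * Real.Gamma a + t * Real.Gamma b := this
      _ ≤ (1 - t) * max (Real.Gamma a) (Real.Gamma b) + t * max (Real.Gamma a) (Real.Gamma b) := by
          gcongr <;> simp [le_max_left, le_max_right, ht1]
      _ = max (Real.Gamma a) (Real.Gamma b) := by ring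

lemma Gamma_le_one_of_mem {s : ℝ} (hs : s ∈ Icc (1:ℝ) 2) : Real.Gamma s ≤ 1 := by
  have := Gamma_le_of_convex one_pos two_pos one_le_two hs
  have h2 : Real.Gamma 2 = 1 := by
    have := Real.Gamma_add_one (s := 1) one_ne_zero
    simpa [Real.Gamma_one] using this
  simpa [Real.Gamma_one, h2] using this

lemma Gamma_le_two_of_mem {s : ℝ} (hs : s ∈ Icc (1:ℝ) 3) : Real.Gamma s ≤ 2 := by
  have := Gamma_le_of_convex one_pos three_pos (by norm_num) hs
  simpa [Real.Gamma_one, Gamma_three] using this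

section Stable

variable {α : ℝ} (hα1 : 1 < α) (hα2 : α < 2)

lemma intE (hα1 : 1 < α) {q : ℝ} (hq : -1 < q) :
    IntegrableOn (fun l : ℝ => l ^ q * Real.exp (-l ^ α)) (Ioi 0) :=
  integrableOn_rpow_mul_exp_neg_rpow hq (by linarith)

lemma valE (hα1 : 1 < α) {q : ℝ} (hq : -1 < q) :
    ∫ l in Ioi (0:ℝ), l ^ q * Real.exp (-l ^ α) = (1 / α) * Real.Gamma ((q + 1) / α) :=
  integral_rpow_mul_exp_neg_rpow (by linarith) hq

lemma Gamma_inv_add_one_le (hα1 : 1 < α) (hα2 : α < 2) : Real.Gamma (1/α + 1) ≤ 1 := by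
  apply Gamma_le_one_of_mem
  constructor
  · have : 0 < 1/α := by positivity
    linarith
  · have : 1/α ≤ 1 := by
      rw [div_le_one (by linarith)]; linarith
    linarith

lemma central_integral_le (hα1 : 1 < α) (hα2 : α < 2) :
    ∫ l in Ioi (0:ℝ), l ^ (2:ℝ) * Real.exp (-l ^ α) ≤ 2 / α := by
  rw [valE hα1 (by norm_num)]
  have h3 : Real.Gamma ((2 + 1) / α) ≤ 2 := by
    apply Gamma_le_two_of_mem
    constructor
    · rw [le_div_iff₀ (by linarith)]; linarith
    · rw [div_le_iff₀ (by linarith)]; linarith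
  rw [div_eq_mul_inv 2 α, mul_comm (2:ℝ) α⁻¹, one_div]
  exact mul_le_mul_of_nonneg_left h3 (by positivity)

lemma absf2_integral_le (hα1 : 1 < α) (hα2 : α < 2) :
    ∫ l in Ioi (0:ℝ), (2 + α*(α+3)*l^α + α^2*l^(2*α)) * Real.exp (-l^α) ≤ 2*α + 6 := by
  have hαpos : (0:ℝ) < α := by linarith
  have hainv : (1/α) ≠ 0 := by positivity
  have hi0 := intE hα1 (q := 0) (by norm_num)
  have hia := intE hα1 (q := α) (by linarith)
  have hib := intE hα1 (q := 2*α) (by linarith)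
  have hrw : (fun l : ℝ => (2 + α*(α+3)*l^α + α^2*l^(2*α)) * Real.exp (-l^α))
      = fun l : ℝ => (2 * (l^(0:ℝ) * Real.exp (-l^α)) + (α*(α+3)) * (l^α * Real.exp (-l^α)))
          + α^2 * (l^(2*α) * Real.exp (-l^α)) := by
    funext l; rw [Real.rpow_zero]; ring
  set c := Real.Gamma (1/α + 1) with hc
  have hc1 : c ≤ 1 := Gamma_inv_add_one_le hα1 hα2
  have hc0 : 0 < c := Real.Gamma_pos_of_pos (by positivity)
  have e0 : (1/α : ℝ) * Real.Gamma ((0 + 1)/α) = c := by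
    rw [hc, Real.Gamma_add_one hainv]; norm_num
  have e1 : Real.Gamma ((α + 1)/α) = c := by
    congr 1
    field_simp
    ring
  have e2 : Real.Gamma ((2*α + 1)/α) = (1/α + 1) * c := by
    rw [hc, ← Real.Gamma_add_one (by positivity : (1/α + 1 : ℝ) ≠ 0)]
    congr 1
    field_simp
    ring
  have h12 : Integrable (fun l : ℝ => 2 * (l^(0:ℝ) * Real.exp (-l ^ α))
      + (α*(α+3)) * (l^α * Real.exp (-l ^ α))) (volume.restrict (Ioi 0)) :=
    (hi0.const_mul 2).add (hia.const_mul _)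
  rw [hrw, integral_add h12 (hib.const_mul _),
    integral_add (hi0.const_mul 2) (hia.const_mul _), integral_const_mul, integral_const_mul,
    integral_const_mul, valE hα1 (by norm_num), valE hα1 (by linarith), valE hα1 (by linarith),
    e0, e1, e2]
  have : 2 * c + α * (α + 3) * (1/α * c) + α^2 * (1/α * ((1/α + 1) * c)) = (2*α + 6) * c := by
    field_simp
    ring
  rw [this]
  nlinarith

noncomputable def I1 (α x : ℝ) : ℝ :=
  ∫ l in Ioi (0:ℝ), Real.exp (-l^α) * (-Real.sin (l*x) * l)

noncomputable def I2 (α x : ℝ) : ℝ :=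
  ∫ l in Ioi (0:ℝ), Real.exp (-l^α) * (-(Real.cos (l*x) * l) * l)

lemma cont_rpow (hα0 : 0 < α) : Continuous fun l : ℝ => l ^ α :=
  continuous_iff_continuousAt.2 fun x => Real.continuousAt_rpow_const x α (Or.inr hα0.le)

lemma contE (hα0 : 0 < α) : Continuous fun l : ℝ => Real.exp (-l ^ α) :=
  Real.continuous_exp.comp (cont_rpow hα0).neg

lemma intE' (hα1 : 1 < α) : IntegrableOn (fun l : ℝ => Real.exp (-l ^ α)) (Ioi 0) := by
  have := intE hα1 (q := 0) (by norm_num)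
  simpa [Real.rpow_zero] using this

lemma intE1 (hα1 : 1 < α) : IntegrableOn (fun l : ℝ => l * Real.exp (-l ^ α)) (Ioi 0) := by
  have := intE hα1 (q := 1) (by norm_num)
  simpa [Real.rpow_one] using this

lemma intE2 (hα1 : 1 < α) : IntegrableOn (fun l : ℝ => l^2 * Real.exp (-l ^ α)) (Ioi 0) := by
  have := intE hα1 (q := 2) (by norm_num)
  simpa [Real.rpow_two] using this

lemma hasDerivAt_I0 (hα1 : 1 < α) (x₀ : ℝ) :
    HasDerivAt (fun x => ∫ l in Ioi (0:ℝ), Real.exp (-l^α) * Real.cos (l*x)) (I1 α x₀) x₀ := by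
  have hα0 : (0:ℝ) < α := by linarith
  have hcF : ∀ x : ℝ, Continuous fun l : ℝ => Real.exp (-l^α) * Real.cos (l*x) := fun x =>
    (contE hα0).mul (Real.continuous_cos.comp (continuous_id.mul continuous_const))
  have hcF' : ∀ x : ℝ, Continuous fun l : ℝ => Real.exp (-l^α) * (-Real.sin (l*x) * l) := fun x =>
    (contE hα0).mul
      (((Real.continuous_sin.comp (continuous_id.mul continuous_const)).neg).mul continuous_id)
  have h1 : ∀ᶠ x in nhds x₀, AEStronglyMeasurable
      (fun l : ℝ => Real.exp (-l^α) * Real.cos (l*x)) (volume.restrict (Ioi 0)) :=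
    Eventually.of_forall fun x => (hcF x).aestronglyMeasurable
  have h2 : Integrable (fun l : ℝ => Real.exp (-l^α) * Real.cos (l*x₀))
      (volume.restrict (Ioi 0)) := by
    apply (intE' hα1).mono' (hcF x₀).aestronglyMeasurable
    refine Eventually.of_forall fun l => ?_
    rw [Real.norm_eq_abs, abs_mul, abs_of_pos (Real.exp_pos _)]
    nlinarith [abs_cos_le_one (l*x₀), Real.exp_pos (-l^α), abs_nonneg (Real.cos (l*x₀))]
  have h3 : AEStronglyMeasurable (fun l : ℝ => Real.exp (-l^α) * (-Real.sin (l*x₀) * l))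
      (volume.restrict (Ioi 0)) := (hcF' x₀).aestronglyMeasurable
  have h4 : ∀ᵐ l ∂(volume.restrict (Ioi (0:ℝ))), ∀ x ∈ Metric.ball x₀ 1,
      ‖Real.exp (-l^α) * (-Real.sin (l*x) * l)‖ ≤ l * Real.exp (-l^α) := by
    filter_upwards [ae_restrict_mem measurableSet_Ioi] with l hl
    intro x _
    have hl0 : (0:ℝ) < l := hl
    rw [Real.norm_eq_abs, abs_mul, abs_of_pos (Real.exp_pos _), abs_mul, abs_neg,
      abs_of_pos hl0]
    nlinarith [mul_nonneg (mul_nonneg (sub_nonneg.2 (abs_sin_le_one (l*x))) hl0.le)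
      (Real.exp_pos (-l^α)).le]
  have h5 : Integrable (fun l : ℝ => l * Real.exp (-l^α)) (volume.restrict (Ioi 0)) := intE1 hα1
  have h6 : ∀ᵐ l ∂(volume.restrict (Ioi (0:ℝ))), ∀ x ∈ Metric.ball x₀ 1,
      HasDerivAt (fun x => Real.exp (-l^α) * Real.cos (l*x))
        (Real.exp (-l^α) * (-Real.sin (l*x) * l)) x := by
    refine Eventually.of_forall fun l => fun x _ => ?_
    have hd1 : HasDerivAt (fun x : ℝ => l * x) l x := by
      simpa using (hasDerivAt_id x).const_mul l
    exact ((Real.hasDerivAt_cos (l*x)).comp x hd1).const_mul _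
  exact (hasDerivAt_integral_of_dominated_loc_of_deriv_le (Metric.ball_mem_nhds x₀ one_pos) h1 h2 h3 h4 h5 h6).2

lemma hasDerivAt_I1 (hα1 : 1 < α) (x₀ : ℝ) :
    HasDerivAt (I1 α) (I2 α x₀) x₀ := by
  have hα0 : (0:ℝ) < α := by linarith
  have hcF : ∀ x : ℝ, Continuous fun l : ℝ => Real.exp (-l^α) * (-Real.sin (l*x) * l) := fun x =>
    (contE hα0).mul
      (((Real.continuous_sin.comp (continuous_id.mul continuous_const)).neg).mul continuous_id)
  have hcF' : ∀ x : ℝ,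
      Continuous fun l : ℝ => Real.exp (-l^α) * (-(Real.cos (l*x) * l) * l) := fun x =>
    (contE hα0).mul
      ((((Real.continuous_cos.comp (continuous_id.mul continuous_const)).mul
        continuous_id).neg).mul continuous_id)
  have h1 : ∀ᶠ x in nhds x₀, AEStronglyMeasurable
      (fun l : ℝ => Real.exp (-l^α) * (-Real.sin (l*x) * l)) (volume.restrict (Ioi 0)) :=
    Eventually.of_forall fun x => (hcF x).aestronglyMeasurable
  have h2 : Integrable (fun l : ℝ => Real.exp (-l^α) * (-Real.sin (l*x₀) * l))
      (volume.restrict (Ioi 0)) := by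
    apply (intE1 hα1).mono' (hcF x₀).aestronglyMeasurable
    filter_upwards [ae_restrict_mem measurableSet_Ioi] with l hl
    have hl0 : (0:ℝ) < l := hl
    rw [Real.norm_eq_abs, abs_mul, abs_of_pos (Real.exp_pos _), abs_mul, abs_neg,
      abs_of_pos hl0]
    nlinarith [mul_nonneg (mul_nonneg (sub_nonneg.2 (abs_sin_le_one (l*x₀))) hl0.le)
      (Real.exp_pos (-l^α)).le]
  have h3 : AEStronglyMeasurable (fun l : ℝ => Real.exp (-l^α) * (-(Real.cos (l*x₀) * l) * l))
      (volume.restrict (Ioi 0)) := (hcF' x₀).aestronglyMeasurable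
  have h4 : ∀ᵐ l ∂(volume.restrict (Ioi (0:ℝ))), ∀ x ∈ Metric.ball x₀ 1,
      ‖Real.exp (-l^α) * (-(Real.cos (l*x) * l) * l)‖ ≤ l^2 * Real.exp (-l^α) := by
    filter_upwards [ae_restrict_mem measurableSet_Ioi] with l hl
    intro x _
    have hl0 : (0:ℝ) < l := hl
    rw [Real.norm_eq_abs, abs_mul, abs_of_pos (Real.exp_pos _), abs_mul, abs_neg, abs_mul,
      abs_of_pos hl0]
    nlinarith [mul_nonneg (mul_nonneg (mul_nonneg
      (sub_nonneg.2 (abs_cos_le_one (l*x))) hl0.le) hl0.le) (Real.exp_pos (-l^α)).le,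
      sq_nonneg l]
  have h5 : Integrable (fun l : ℝ => l^2 * Real.exp (-l^α)) (volume.restrict (Ioi 0)) :=
    intE2 hα1
  have h6 : ∀ᵐ l ∂(volume.restrict (Ioi (0:ℝ))), ∀ x ∈ Metric.ball x₀ 1,
      HasDerivAt (fun x => Real.exp (-l^α) * (-Real.sin (l*x) * l))
        (Real.exp (-l^α) * (-(Real.cos (l*x) * l) * l)) x := by
    refine Eventually.of_forall fun l => fun x _ => ?_
    have hd1 : HasDerivAt (fun x : ℝ => l * x) l x := by
      simpa using (hasDerivAt_id x).const_mul l
    exact ((((Real.hasDerivAt_sin (l*x)).comp x hd1).neg).mul_const l).const_mul _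
  exact (hasDerivAt_integral_of_dominated_loc_of_deriv_le (Metric.ball_mem_nhds x₀ one_pos) h1 h2 h3 h4 h5 h6).2

noncomputable def fS (α l : ℝ) : ℝ := l^2 * Real.exp (-l^α)
noncomputable def f1S (α l : ℝ) : ℝ := (2*l - α*l^(α+1)) * Real.exp (-l^α)
noncomputable def f2S (α l : ℝ) : ℝ := (2 - α*(α+3)*l^α + α^2*l^(2*α)) * Real.exp (-l^α)
noncomputable def GS (α x l : ℝ) : ℝ :=
  f1S α l * Real.cos (l*x) + x * (fS α l * Real.sin (l*x))

lemma dE (hα1 : 1 < α) {l : ℝ} (hl : 0 < l) :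
    HasDerivAt (fun l => Real.exp (-l^α)) (Real.exp (-l^α) * -(α * l^(α-1))) l := by
  have hr := Real.hasDerivAt_rpow_const (x := l) (p := α) (Or.inl hl.ne')
  exact (Real.hasDerivAt_exp (-l^α)).comp l hr.neg

lemma dfS (hα1 : 1 < α) {l : ℝ} (hl : 0 < l) :
    HasDerivAt (fS α) (f1S α l) l := by
  have h := (hasDerivAt_pow 2 l).mul (dE hα1 hl)
  have h2 : l^(2:ℕ) * l^(α-1) = l^(α+1) := by
    rw [← Real.rpow_natCast l 2, ← Real.rpow_add hl]
    congr 1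
    push_cast
    ring
  refine h.congr_deriv (Eq.symm ?_)
  unfold f1S
  push_cast
  linear_combination (α * Real.exp (-l^α)) * h2

lemma df1S (hα1 : 1 < α) {l : ℝ} (hl : 0 < l) :
    HasDerivAt (f1S α) (f2S α l) l := by
  have hu : HasDerivAt (fun l : ℝ => 2*l - α*l^(α+1))
      (2*1 - α*((α+1) * l^(α+1-1))) l :=
    ((hasDerivAt_id l).const_mul 2).sub
      ((Real.hasDerivAt_rpow_const (x := l) (p := α+1) (Or.inl hl.ne')).const_mul α)
  have h := hu.mul (dE hα1 hl)
  have e1 : l^(α+1-1) = l^α := by norm_num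
  have e2 : l * l^(α-1) = l^α := by
    nth_rewrite 1 [← Real.rpow_one l]
    rw [← Real.rpow_add hl]
    norm_num
  have e3 : l^(α+1) * l^(α-1) = l^(2*α) := by
    rw [← Real.rpow_add hl]
    ring_nf
  refine h.congr_deriv (Eq.symm ?_)
  unfold f2S
  rw [e1]
  linear_combination (2*α * Real.exp (-l^α)) * e2 + (-(α^2) * Real.exp (-l^α)) * e3

lemma dGS (hα1 : 1 < α) (x : ℝ) {l : ℝ} (hl : 0 < l) :
    HasDerivAt (GS α x) (f2S α l * Real.cos (l*x) + x^2 * (fS α l * Real.cos (l*x))) l := by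
  have dcos : HasDerivAt (fun l : ℝ => Real.cos (l*x)) (-Real.sin (l*x) * x) l :=
    by have := (Real.hasDerivAt_cos (l*x)).comp l (hasDerivAt_mul_const (x := l) x); exact this
  have dsin : HasDerivAt (fun l : ℝ => Real.sin (l*x)) (Real.cos (l*x) * x) l :=
    by have := (Real.hasDerivAt_sin (l*x)).comp l (hasDerivAt_mul_const (x := l) x); exact this
  have h := ((df1S hα1 hl).mul dcos).add
    ((((dfS hα1 hl).mul dsin).const_mul x))
  refine h.congr_deriv (Eq.symm ?_)
  unfold fS f1S f2S
  ring

lemma contfS (hα0 : 0 < α) : Continuous (fS α) := (continuous_pow 2).mul (contE hα0)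

lemma contf1S (hα1 : 1 < α) : Continuous (f1S α) :=
  ((continuous_const.mul continuous_id).sub
    (continuous_const.mul (cont_rpow (α := α+1) (by linarith)))).mul (contE (by linarith))

lemma contf2S (hα1 : 1 < α) : Continuous (f2S α) :=
  (((continuous_const.sub (continuous_const.mul (cont_rpow (α := α) (by linarith)))).add
    (continuous_const.mul (cont_rpow (α := 2*α) (by linarith)))).mul (contE (by linarith)))

lemma contGS (hα1 : 1 < α) (x : ℝ) : Continuous (GS α x) :=
  ((contf1S hα1).mul (Real.continuous_cos.comp (continuous_id.mul continuous_const))).add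
    (continuous_const.mul ((contfS (by linarith)).mul
      (Real.continuous_sin.comp (continuous_id.mul continuous_const))))

lemma GS_zero (hα1 : 1 < α) (x : ℝ) : GS α x 0 = 0 := by
  simp [GS, f1S, fS, Real.zero_rpow (show α+1 ≠ 0 by positivity)]

lemma tendsto_rpow_exp (hα1 : 1 < α) (s : ℝ) :
    Tendsto (fun l : ℝ => l^s * Real.exp (-l^α)) atTop (𝓝 0) := by
  have h := rpow_mul_exp_neg_mul_rpow_isLittleO_exp_neg s hα1 one_pos
  simp only [neg_mul, one_mul] at h
  apply h.tendsto_zero_of_tendsto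
  rw [Real.tendsto_exp_comp_nhds_zero]
  have h2 := Tendsto.const_mul_atTop (show (0:ℝ) < 1/2 by norm_num) (tendsto_id (α := ℝ))
  exact tendsto_neg_atTop_atBot.comp h2

lemma GS_tendsto (hα1 : 1 < α) (x : ℝ) : Tendsto (GS α x) atTop (𝓝 0) := by
  have h1 := tendsto_rpow_exp hα1 1
  have h2 := tendsto_rpow_exp hα1 (α+1)
  have h3 := tendsto_rpow_exp hα1 2
  have hg : Tendsto (fun l : ℝ => 2*(l^(1:ℝ) * Real.exp (-l^α)) + α*(l^(α+1) * Real.exp (-l^α))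
      + |x| *(l^(2:ℝ) * Real.exp (-l^α))) atTop (𝓝 0) := by
    have := ((h1.const_mul 2).add (h2.const_mul α)).add (h3.const_mul |x|)
    simpa using this
  apply squeeze_zero_norm' _ hg
  filter_upwards [eventually_ge_atTop (0:ℝ)] with l hl
  have hE : (0:ℝ) < Real.exp (-l^α) := Real.exp_pos _
  have hr1 : (0:ℝ) ≤ l^(α+1) := Real.rpow_nonneg hl _
  have habs1 : |f1S α l| ≤ (2*l + α*l^(α+1)) * Real.exp (-l^α) := by
    unfold f1S
    rw [abs_mul, abs_of_pos hE]
    apply mul_le_mul_of_nonneg_right _ hE.le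
    rw [abs_le]
    constructor <;> nlinarith [hα1]
  have habs2 : |fS α l| ≤ l^2 * Real.exp (-l^α) := by
    unfold fS
    rw [abs_mul, abs_of_pos hE, abs_of_nonneg (sq_nonneg l)]
  calc ‖GS α x l‖ = |f1S α l * Real.cos (l*x) + x * (fS α l * Real.sin (l*x))| := rfl
    _ ≤ |f1S α l * Real.cos (l*x)| + |x * (fS α l * Real.sin (l*x))| := abs_add_le _ _
    _ = |f1S α l| * |Real.cos (l*x)| + |x| * (|fS α l| * |Real.sin (l*x)|) := by
        rw [abs_mul, abs_mul, abs_mul]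
    _ ≤ |f1S α l| * 1 + |x| * (|fS α l| * 1) := by
        gcongr
        · exact abs_cos_le_one _
        · exact abs_sin_le_one _
    _ ≤ (2*l + α*l^(α+1)) * Real.exp (-l^α) * 1 + |x| * (l^2 * Real.exp (-l^α) * 1) := by
        gcongr
    _ = 2*(l^(1:ℝ) * Real.exp (-l^α)) + α*(l^(α+1) * Real.exp (-l^α))
        + |x| *(l^(2:ℝ) * Real.exp (-l^α)) := by
        rw [Real.rpow_one, Real.rpow_two]
        ring

lemma intM (hα1 : 1 < α) :
    IntegrableOn (fun l : ℝ => (2 + α*(α+3)*l^α + α^2*l^(2*α)) * Real.exp (-l^α)) (Ioi 0) := by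
  have hi0 := intE hα1 (q := 0) (by norm_num)
  have hia := intE hα1 (q := α) (by linarith)
  have hib := intE hα1 (q := 2*α) (by linarith)
  have hrw : (fun l : ℝ => (2 + α*(α+3)*l^α + α^2*l^(2*α)) * Real.exp (-l^α))
      = fun l : ℝ => (2 * (l^(0:ℝ) * Real.exp (-l^α)) + (α*(α+3)) * (l^α * Real.exp (-l^α)))
          + α^2 * (l^(2*α) * Real.exp (-l^α)) := by
    funext l; rw [Real.rpow_zero]; ring
  rw [hrw]
  exact ((hi0.const_mul 2).add (hia.const_mul _)).add (hib.const_mul _)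

lemma I2_tail (hα1 : 1 < α) (hα2 : α < 2) {x : ℝ} (hx : x ≠ 0) :
    |I2 α x| ≤ (2*α+6)/x^2 := by
  have hα0 : (0:ℝ) < α := by linarith
  have hx2 : (0:ℝ) < x^2 := by positivity
  have hbnd : ∀ᵐ l ∂volume.restrict (Ioi (0:ℝ)),
      ‖f2S α l * Real.cos (l*x)‖ ≤ (2 + α*(α+3)*l^α + α^2*l^(2*α)) * Real.exp (-l^α) := by
    filter_upwards [ae_restrict_mem measurableSet_Ioi] with l hl
    have hl0 : (0:ℝ) < l := hl
    have hr1 : (0:ℝ) ≤ l^α := Real.rpow_nonneg hl0.le _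
    have hr2 : (0:ℝ) ≤ l^(2*α) := Real.rpow_nonneg hl0.le _
    have hE : (0:ℝ) < Real.exp (-l^α) := Real.exp_pos _
    unfold f2S
    rw [Real.norm_eq_abs, abs_mul, abs_mul, abs_of_pos hE]
    calc |2 - α*(α+3)*l^α + α^2*l^(2*α)| * Real.exp (-l^α) * |Real.cos (l*x)|
        ≤ (2 + α*(α+3)*l^α + α^2*l^(2*α)) * Real.exp (-l^α) * 1 := by
          gcongr
          · rw [abs_le]
            constructor <;> nlinarith
          · exact abs_cos_le_one _
      _ = (2 + α*(α+3)*l^α + α^2*l^(2*α)) * Real.exp (-l^α) := mul_one _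
  have hbnd1 : ∀ᵐ l ∂volume.restrict (Ioi (0:ℝ)),
      ‖fS α l * Real.cos (l*x)‖ ≤ l^2 * Real.exp (-l^α) := by
    filter_upwards [ae_restrict_mem measurableSet_Ioi] with l hl
    have hE : (0:ℝ) < Real.exp (-l^α) := Real.exp_pos _
    unfold fS
    rw [Real.norm_eq_abs, abs_mul, abs_mul, abs_of_pos hE, abs_of_nonneg (sq_nonneg l)]
    calc l^2 * Real.exp (-l^α) * |Real.cos (l*x)| ≤ l^2 * Real.exp (-l^α) * 1 := by
          gcongr
          exact abs_cos_le_one _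
      _ = l^2 * Real.exp (-l^α) := mul_one _
  have hint2 : IntegrableOn (fun l => f2S α l * Real.cos (l*x)) (Ioi 0) := by
    apply (intM hα1).mono'
      ((contf2S hα1).mul (Real.continuous_cos.comp (continuous_id.mul continuous_const))).aestronglyMeasurable
    exact hbnd
  have hint1 : IntegrableOn (fun l => fS α l * Real.cos (l*x)) (Ioi 0) := by
    apply (intE2 hα1).mono'
      ((contfS hα0).mul (Real.continuous_cos.comp (continuous_id.mul continuous_const))).aestronglyMeasurable
    exact hbnd1
  have hint : IntegrableOn
      (fun l => f2S α l * Real.cos (l*x) + x^2 * (fS α l * Real.cos (l*x))) (Ioi 0) :=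
    hint2.add (hint1.const_mul _)
  have key := integral_Ioi_of_hasDerivAt_of_tendsto (a := (0:ℝ))
    (f := GS α x) (f' := fun l => f2S α l * Real.cos (l*x) + x^2 * (fS α l * Real.cos (l*x)))
    (contGS hα1 x).continuousWithinAt (fun l hl => dGS hα1 x hl) hint (GS_tendsto hα1 x)
  rw [GS_zero hα1 x] at key
  norm_num at key
  rw [integral_add hint2 (hint1.const_mul _), integral_const_mul] at key
  have hI2 : I2 α x = -∫ l in Ioi (0:ℝ), fS α l * Real.cos (l*x) := by
    rw [I2, ← integral_neg]
    congr 1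
    funext l
    unfold fS
    ring
  have hA : |∫ l in Ioi (0:ℝ), f2S α l * Real.cos (l*x)| ≤ 2*α+6 := by
    have hb := norm_integral_le_of_norm_le (intM hα1) hbnd
    rw [Real.norm_eq_abs] at hb
    exact hb.trans (absf2_integral_le hα1 hα2)
  rw [hI2, abs_neg, le_div_iff₀ hx2]
  have hkey' : (∫ l in Ioi (0:ℝ), fS α l * Real.cos (l*x)) * x^2
      = -(∫ l in Ioi (0:ℝ), f2S α l * Real.cos (l*x)) := by linarith [key]
  have heq : |(∫ l in Ioi (0:ℝ), fS α l * Real.cos (l*x))| * x^2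
      = |∫ l in Ioi (0:ℝ), f2S α l * Real.cos (l*x)| := by
    rw [← abs_of_pos hx2, ← abs_mul, hkey', abs_neg]
  rw [heq]
  exact hA

lemma I2_central (hα1 : 1 < α) (hα2 : α < 2) (x : ℝ) : |I2 α x| ≤ 2/α := by
  have hbnd : ∀ᵐ l ∂volume.restrict (Ioi (0:ℝ)),
      ‖Real.exp (-l^α) * (-(Real.cos (l*x) * l) * l)‖ ≤ l^2 * Real.exp (-l^α) := by
    filter_upwards [ae_restrict_mem measurableSet_Ioi] with l hl
    have hl0 : (0:ℝ) < l := hl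
    rw [Real.norm_eq_abs, abs_mul, abs_of_pos (Real.exp_pos _), abs_mul, abs_neg, abs_mul,
      abs_of_pos hl0]
    nlinarith [mul_nonneg (mul_nonneg (mul_nonneg
      (sub_nonneg.2 (abs_cos_le_one (l*x))) hl0.le) hl0.le) (Real.exp_pos (-l^α)).le,
      sq_nonneg l]
  have hb := norm_integral_le_of_norm_le (intE2 hα1) hbnd
  rw [Real.norm_eq_abs] at hb
  refine hb.trans ?_
  have : (∫ l in Ioi (0:ℝ), l^2 * Real.exp (-l^α))
      = ∫ l in Ioi (0:ℝ), l^(2:ℝ) * Real.exp (-l^α) := by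
    congr 1
    funext l
    rw [Real.rpow_two]
  rw [this]
  exact central_integral_le hα1 hα2

end Stable

/-- Density of the standard symmetric `α`-stable law. -/
noncomputable def stablePdf (α : ℝ) (x : ℝ) : ℝ :=
  (1 / π) * ∫ l in Set.Ioi (0:ℝ), Real.exp (-l ^ α) * Real.cos (l * x)

theorem stmt_11 (α : ℝ) (hα : α ∈ Set.Ioo (1:ℝ) 2) :
    (∫ u : ℝ, |deriv (deriv (stablePdf α)) u|) ≤ (8 / π) * Real.sqrt ((α + 3) / α) := by
  obtain ⟨hα1, hα2⟩ := hα
  have hα0 : (0:ℝ) < α := by linarith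
  have hπ : (0:ℝ) < π := Real.pi_pos
  have hder1 : deriv (stablePdf α) = fun x => (1/π) * I1 α x := by
    funext y
    exact ((hasDerivAt_I0 hα1 y).const_mul (1/π)).deriv
  have hder2 : ∀ u, deriv (deriv (stablePdf α)) u = (1/π) * I2 α u := by
    intro u
    rw [hder1]
    exact ((hasDerivAt_I1 hα1 u).const_mul (1/π)).deriv
  set A := Real.sqrt (α*(α+3)) with hA
  have hApos : 0 < A := Real.sqrt_pos.2 (by positivity)
  have hA2 : A^2 = α*(α+3) := Real.sq_sqrt (by positivity)
  set h : ℝ → ℝ := fun x => if x^2 ≤ α*(α+3) then 2/(α*π) else (2*α+6)/(π*x^2) with hh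
  have hicc_compl : (Icc (-A) A)ᶜ = Iio (-A) ∪ Ioi A := by
    ext x
    simp only [mem_compl_iff, mem_Icc, mem_union, mem_Iio, mem_Ioi, not_and_or, not_le]
  have hpt : ∀ u, |deriv (deriv (stablePdf α)) u| ≤ h u := by
    intro u
    rw [hder2 u, abs_mul, abs_of_pos (by positivity : (0:ℝ) < 1/π)]
    by_cases hc : u^2 ≤ α*(α+3)
    · simp only [hh, if_pos hc]
      calc (1/π) * |I2 α u| ≤ (1/π) * (2/α) := by
            gcongr
            exact I2_central hα1 hα2 u
        _ = 2/(α*π) := by field_simp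
    · have hu : u ≠ 0 := by
        intro h0
        apply hc
        rw [h0]
        norm_num
        positivity
      simp only [hh, if_neg hc]
      calc (1/π) * |I2 α u| ≤ (1/π) * ((2*α+6)/u^2) := by
            gcongr
            exact I2_tail hα1 hα2 hu
        _ = (2*α+6)/(π*u^2) := by field_simp
  have heven : ∀ x : ℝ, h (-x) = h x := fun x => by simp [hh, neg_sq]
  have hIcc : IntegrableOn h (Icc (-A) A) := by
    have hconst : IntegrableOn (fun _ : ℝ => 2/(α*π)) (Icc (-A) A) :=
      integrableOn_const measure_Icc_lt_top.ne
    apply hconst.congr_fun _ measurableSet_Icc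
    intro x hx
    have hc : x^2 ≤ α*(α+3) := by nlinarith [hx.1, hx.2, hApos.le]
    simp only [hh, if_pos hc]
  have hIoiInt : IntegrableOn h (Ioi A) := by
    have hbase : IntegrableOn (fun x : ℝ => ((2*α+6)/π) * x^(-2:ℝ)) (Ioi A) :=
      (integrableOn_Ioi_rpow_of_lt (show (-2:ℝ) < -1 by norm_num) hApos).const_mul ((2*α+6)/π)
    apply hbase.congr_fun _ measurableSet_Ioi
    intro x hx
    have hxA : A < x := hx
    have hx0 : (0:ℝ) < x := hApos.trans hxA
    have hc : ¬ x^2 ≤ α*(α+3) := by nlinarith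
    have hr : x^(-2:ℝ) = (x^2)⁻¹ := by
      rw [Real.rpow_neg hx0.le, Real.rpow_two]
    simp only [hh, if_neg hc, hr]
    field_simp
  have hne : MeasurableEmbedding (fun x : ℝ => -x) :=
    (Homeomorph.neg ℝ).isClosedEmbedding.measurableEmbedding
  have hIioInt : IntegrableOn h (Iio (-A)) := by
    have hpre : (fun x : ℝ => -x) ⁻¹' (Iio (-A)) = Ioi A := by
      ext y
      simp
    have hmap : volume.restrict (Iio (-A))
        = Measure.map (fun x : ℝ => -x) (volume.restrict (Ioi A)) := by
      calc volume.restrict (Iio (-A))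
          = (Measure.map (fun x : ℝ => -x) volume).restrict (Iio (-A)) := by
            rw [Measure.map_neg_eq_self]
        _ = Measure.map (fun x : ℝ => -x)
              (volume.restrict ((fun x : ℝ => -x) ⁻¹' (Iio (-A)))) :=
            Measure.restrict_map measurable_neg measurableSet_Iio
        _ = Measure.map (fun x : ℝ => -x) (volume.restrict (Ioi A)) := by rw [hpre]
    rw [IntegrableOn, hmap, hne.integrable_map_iff]
    have : (h ∘ fun x : ℝ => -x) = h := funext fun x => heven x
    rw [this]
    exact hIoiInt
  have hint : Integrable h := by
    rw [← integrableOn_univ]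
    have huniv : (univ : Set ℝ) = Icc (-A) A ∪ (Iio (-A) ∪ Ioi A) := by
      rw [← hicc_compl, union_compl_self]
    rw [huniv]
    exact hIcc.union (hIioInt.union hIoiInt)
  have hIoiVal : ∫ x in Ioi A, h x = (2*α+6)/(π*A) := by
    have hcong : ∫ x in Ioi A, h x = ∫ x in Ioi A, ((2*α+6)/π) * x^(-2:ℝ) := by
      apply setIntegral_congr_fun measurableSet_Ioi
      intro x hx
      have hxA : A < x := hx
      have hx0 : (0:ℝ) < x := hApos.trans hxA
      have hc : ¬ x^2 ≤ α*(α+3) := by nlinarith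
      have hr : x^(-2:ℝ) = (x^2)⁻¹ := by
        rw [Real.rpow_neg hx0.le, Real.rpow_two]
      simp only [hh, if_neg hc, hr]
      field_simp
    rw [hcong, integral_const_mul, integral_Ioi_rpow_of_lt (by norm_num) hApos]
    have : A^(-2+1 : ℝ) = A⁻¹ := by
      norm_num
      rw [Real.rpow_neg_one]
    rw [this]
    field_simp
    ring
  have hIioVal : ∫ x in Iio (-A), h x = (2*α+6)/(π*A) := by
    rw [setIntegral_congr_set Iio_ae_eq_Iic, ← integral_comp_neg_Ioi]
    simp_rw [heven]
    exact hIoiVal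
  have hIccVal : ∫ x in Icc (-A) A, h x = 2*A * (2/(α*π)) := by
    have hcong : ∫ x in Icc (-A) A, h x = ∫ _x in Icc (-A) A, 2/(α*π) := by
      apply setIntegral_congr_fun measurableSet_Icc
      intro x hx
      have hc : x^2 ≤ α*(α+3) := by nlinarith [hx.1, hx.2, hApos.le]
      simp only [hh, if_pos hc]
    rw [hcong, setIntegral_const, Real.volume_real_Icc_of_le (by linarith),
      smul_eq_mul, show A - -A = 2*A by ring]
  have htotal : ∫ x : ℝ, h x = (8/π) * Real.sqrt ((α+3)/α) := by
    have hsplit : ∫ x : ℝ, h x = (∫ x in Icc (-A) A, h x) + ∫ x in (Icc (-A) A)ᶜ, h x :=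
      (integral_add_compl measurableSet_Icc hint).symm
    have hcompl : ∫ x in (Icc (-A) A)ᶜ, h x = (∫ x in Iio (-A), h x) + ∫ x in Ioi A, h x := by
      rw [hicc_compl]
      apply setIntegral_union _ measurableSet_Ioi hIioInt hIoiInt
      rw [Set.disjoint_left]
      intro x h1 h2
      simp only [mem_Iio, mem_Ioi] at h1 h2
      linarith [hApos]
    set S := Real.sqrt ((α+3)/α) with hS
    have hS0 : 0 < S := Real.sqrt_pos.2 (by positivity)
    have hS2 : S^2 = (α+3)/α := Real.sq_sqrt (by positivity)
    have hAS : A = α * S := by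
      have h1 : (α*S)^2 = α*(α+3) := by
        rw [mul_pow, hS2]
        field_simp
      have h2 : (0:ℝ) ≤ α*S := by positivity
      rw [hA, ← h1, Real.sqrt_sq h2]
    have hαS2 : α * S^2 = α + 3 := by
      rw [hS2]
      field_simp
    rw [hsplit, hcompl, hIccVal, hIioVal, hIoiVal, hAS]
    field_simp
    linear_combination (-4) * hαS2
  calc (∫ u : ℝ, |deriv (deriv (stablePdf α)) u|) ≤ ∫ u : ℝ, h u :=
      integral_mono_of_nonneg (Eventually.of_forall fun u => abs_nonneg _) hint
        (Eventually.of_forall hpt)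
    _ = (8/π) * Real.sqrt ((α+3)/α) := htotal
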